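/- Let V = F_q^n be a vector space over a finite field, T : V → V a linear map, and for each subspace W let W ∩ T⁻¹W denote {w ∈ W : T w ∈ W}. For integers n ≥ a > b ≥ 0, let N(a,b) be the number of a-dimensional subspaces W with dim(W ∩ T⁻¹W) = b, and let X_a be the number of a-dimensional T-invariant subspaces. Then N(a,b) = X_b · (n-b choose a-b)_q − X_a · (a choose b)_q + ∑_{j=0}^{b-1} N(b,j) · ((n-2b+j) choose (a-2b+j))_q − ∑_{k=b+1}^{a-1} N(a,k) · (k choose b)_q, where (· choose ·)_q denotes the Gaussian binomial coefficient counting subspaces over F_q. -/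

import Mathlib

/-!
Double count the pairs `U ≤ W` with `dim U = b`, `dim W = a` and `U ≤ W ∩ T⁻¹W`, i.e. `U + TU ≤ W`.
Grouped by `W` they number `∑_k N(a,k) (k choose b)_q`. Grouped by `U` they number
`∑_j N(b,j) (n-2b+j choose a-2b+j)_q`, because `dim (U + TU) = 2b - dim (U ∩ T⁻¹U)` and the
`a`-dimensional subspaces containing a `z`-dimensional one are the `(a-z)`-dimensional subspaces of
the quotient. Since `N(c,c) = X_c`, isolating the terms `k = b`, `k = a` and `j = b` gives the
recurrence.

Subspaces are counted along the defining recursion of `gaussBinom`. For a line `L`, the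
`(k+1)`-dimensional subspaces containing `L` correspond to the `k`-dimensional subspaces of
`V ⧸ L`; those meeting `L` trivially and mapping onto a given `(k+1)`-dimensional `U ≤ V ⧸ L` are
the ranges of the linear sections of `V → V ⧸ L` over `U`, which form an affine space over
`Hom(U, L)` and so number `q^(k+1)`.
-/

def gaussBinom {R : Type*} [CommSemiring R] (q : R) : ℕ → ℕ → R
  | _, 0 => 1
  | 0, _ + 1 => 0
  | n + 1, k + 1 => gaussBinom q n k + q ^ (k + 1) * gaussBinom q n (k + 1)

/-- Gaussian binomial with integer arguments: zero when the lower index is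
negative or exceeds the upper index. -/
def gaussBinomZ {R : Type*} [CommRing R] (q : R) (n k : ℤ) : R :=
  if 0 ≤ k ∧ k ≤ n then gaussBinom q n.toNat k.toNat else 0

/-- The number of `a`-dimensional subspaces `W` of `F^n` with
`dim (W ∩ T⁻¹W) = b`. -/
noncomputable def Ncount (F : Type*) [Field F] (n : ℕ) (T : (Fin n → F) →ₗ[F] (Fin n → F))
    (a b : ℕ) : ℕ :=
  Nat.card {W : Submodule F (Fin n → F) //
    Module.finrank F W = a ∧ Module.finrank F ↥(W ⊓ W.comap T) = b}

/-- The number of `a`-dimensional `T`-invariant subspaces of `F^n`. -/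
noncomputable def Xcount (F : Type*) [Field F] (n : ℕ) (T : (Fin n → F) →ₗ[F] (Fin n → F))
    (a : ℕ) : ℕ :=
  Nat.card {W : Submodule F (Fin n → F) //
    Module.finrank F W = a ∧ W.map T ≤ W}

open Module

section GaussBinom
variable {R : Type*}

theorem gaussBinom_zero_right [CommSemiring R] (q : R) (n : ℕ) : gaussBinom q n 0 = 1 := by
  cases n <;> rfl

theorem gaussBinom_eq_zero_of_lt [CommSemiring R] (q : R) :
    ∀ {n k : ℕ}, n < k → gaussBinom q n k = 0
  | 0, _ + 1, _ => rfl
  | n + 1, k + 1, h => by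
    rw [gaussBinom, gaussBinom_eq_zero_of_lt q (by omega), gaussBinom_eq_zero_of_lt q (by omega),
      mul_zero, add_zero]

theorem gaussBinom_self [CommSemiring R] (q : R) : ∀ n : ℕ, gaussBinom q n n = 1
  | 0 => rfl
  | n + 1 => by
    rw [gaussBinom, gaussBinom_self q n, gaussBinom_eq_zero_of_lt q (by omega), mul_zero, add_zero]

theorem Nat.cast_gaussBinom [CommSemiring R] (q : ℕ) :
    ∀ n k : ℕ, ((gaussBinom q n k : ℕ) : R) = gaussBinom (q : R) n k
  | _, 0 => by simp [gaussBinom_zero_right]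
  | 0, _ + 1 => by simp [gaussBinom]
  | n + 1, k + 1 => by
    simp only [gaussBinom, Nat.cast_add, Nat.cast_mul, Nat.cast_pow, Nat.cast_gaussBinom q n]

theorem gaussBinomZ_natCast [CommRing R] (q : R) (n k : ℕ) :
    gaussBinomZ q n k = gaussBinom q n k := by
  by_cases hkn : k ≤ n
  · simp [gaussBinomZ, hkn]
  · rw [gaussBinomZ, if_neg (by omega), gaussBinom_eq_zero_of_lt q (by omega)]

theorem gaussBinomZ_of_neg [CommRing R] (q : R) {n k : ℤ} (hk : k < 0) :
    gaussBinomZ q n k = 0 :=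
  if_neg (by omega)

end GaussBinom

theorem Nat.card_subtype_eq_card_and_add_card_and_not {α : Type*} [Finite α] (p q : α → Prop) :
    Nat.card {x // p x} = Nat.card {x // p x ∧ q x} + Nat.card {x // p x ∧ ¬ q x} := by
  classical
  rw [← Nat.card_sum]
  exact Nat.card_congr ((Equiv.sumCompl fun x : {x // p x} => q x.1).symm.trans (Equiv.sumCongr
    (Equiv.subtypeSubtypeEquivSubtypeInter p q) (Equiv.subtypeSubtypeEquivSubtypeInter p (¬ q ·))))

theorem Fintype.sum_subtype_comp_eq_sum_range_card_mul {α R : Type*} [NonAssocSemiring R]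
    (p : α → Prop) [Fintype {x // p x}] (d : α → ℕ) {m : ℕ} (hd : ∀ x, p x → d x < m)
    (g : ℕ → R) :
    ∑ x : {x // p x}, g (d x)
      = ∑ k ∈ Finset.range m, (Nat.card {x // p x ∧ d x = k} : R) * g k := by
  classical
  rw [← Finset.sum_fiberwise_of_maps_to (t := Finset.range m)
    fun x _ => Finset.mem_range.mpr (hd x.1 x.2)]
  refine Finset.sum_congr rfl fun k _ => ?_
  rw [Finset.sum_congr rfl fun x hx => by rw [(Finset.mem_filter.mp hx).2], Finset.sum_const,
    ← Nat.card_congr (Equiv.subtypeSubtypeEquivSubtypeInter p (d · = k)), Nat.card_eq_fintype_card,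
    Fintype.card_subtype, nsmul_eq_mul]

instance Submodule.finite_of_finite_field {K V : Type*} [Field K] [Finite K] [AddCommGroup V]
    [Module K V] [Module.Finite K V] : Finite (Submodule K V) :=
  have := Module.finite_of_finite K (M := V)
  Finite.of_injective _ SetLike.coe_injective

namespace Submodule

section LinearAlgebra
variable {K V : Type*} [Field K] [AddCommGroup V] [Module K V]

theorem le_inf_comap_iff_sup_map_le (T : V →ₗ[K] V) (U W : Submodule K V) :
    U ≤ W ⊓ W.comap T ↔ U ⊔ U.map T ≤ W := by
  rw [le_inf_iff, sup_le_iff, map_le_iff_le_comap]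

variable [FiniteDimensional K V]

theorem finrank_map_add_finrank_inf_ker {V₂ : Type*} [AddCommGroup V₂] [Module K V₂]
    (f : V →ₗ[K] V₂) (W : Submodule K V) :
    finrank K (W.map f) + finrank K ↥(W ⊓ LinearMap.ker f) = finrank K W := by
  have h := LinearMap.finrank_range_add_finrank_ker (f.domRestrict W)
  rwa [LinearMap.range_domRestrict, LinearMap.ker_domRestrict, ← finrank_map_subtype_eq,
    map_comap_subtype] at h

theorem finrank_comap_mkQ (Z : Submodule K V) (U : Submodule K (V ⧸ Z)) :
    finrank K (U.comap Z.mkQ) = finrank K U + finrank K Z := by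
  have h := finrank_map_add_finrank_inf_ker Z.mkQ (U.comap Z.mkQ)
  rw [map_comap_eq_of_surjective Z.mkQ_surjective, ker_mkQ, inf_eq_right.mpr (Z.le_comap_mkQ U)]
    at h
  exact h.symm

theorem finrank_sup_map_add_finrank_inf_comap (T : V →ₗ[K] V) (U : Submodule K V) :
    finrank K ↥(U ⊔ U.map T) + finrank K ↥(U ⊓ U.comap T) = 2 * finrank K U := by
  have hU := finrank_map_add_finrank_inf_ker (U.mkQ ∘ₗ T) U
  have hsup := finrank_map_add_finrank_inf_ker U.mkQ (U ⊔ U.map T)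
  rw [LinearMap.ker_comp, ker_mkQ] at hU
  rw [ker_mkQ, inf_eq_right.mpr le_sup_left, map_sup, mkQ_map_self, bot_sup_eq, ← map_comp] at hsup
  omega

theorem finrank_map_mkQ_of_disjoint {L W : Submodule K V} (h : Disjoint W L) :
    finrank K (W.map L.mkQ) = finrank K W := by
  have := finrank_map_add_finrank_inf_ker L.mkQ W
  rwa [ker_mkQ, h.eq_bot, finrank_bot, add_zero] at this

theorem finrank_inf_comap_eq_iff (T : V →ₗ[K] V) (W : Submodule K V) :
    finrank K ↥(W ⊓ W.comap T) = finrank K W ↔ W.map T ≤ W := by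
  rw [map_le_iff_le_comap, ← inf_eq_left]
  exact ⟨eq_of_le_of_finrank_eq inf_le_left, fun h => by rw [h]⟩

end LinearAlgebra

section Sections
variable {K V : Type*} [Field K] [AddCommGroup V] [Module K V]
  {L : Submodule K V} {U : Submodule K (V ⧸ L)}

theorem sub_mem_of_mkQ_comp_eq {s s' : U →ₗ[K] V} (hs : L.mkQ ∘ₗ s = U.subtype)
    (hs' : L.mkQ ∘ₗ s' = U.subtype) (u : U) : s u - s' u ∈ L := by
  rw [← Quotient.mk_eq_zero, Quotient.mk_sub]
  exact sub_eq_zero.mpr ((LinearMap.congr_fun hs u).trans (LinearMap.congr_fun hs' u).symm)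

theorem disjoint_range_of_mkQ_comp_eq {s : U →ₗ[K] V} (hs : L.mkQ ∘ₗ s = U.subtype) :
    Disjoint (LinearMap.range s) L := by
  rw [disjoint_def]
  rintro _ ⟨u, rfl⟩ hu
  have hu0 : (u : V ⧸ L) = 0 := by
    rw [← (Quotient.mk_eq_zero L).mpr hu]
    exact (LinearMap.congr_fun hs u).symm
  rw [(Submodule.coe_eq_zero).mp hu0, map_zero]

theorem map_mkQ_range_of_mkQ_comp_eq {s : U →ₗ[K] V} (hs : L.mkQ ∘ₗ s = U.subtype) :
    (LinearMap.range s).map L.mkQ = U := by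
  rw [← LinearMap.range_comp, hs, range_subtype]

theorem exists_mkQ_comp_eq_of_disjoint {W : Submodule K V} (hW : Disjoint W L)
    (hWU : W.map L.mkQ = U) :
    ∃ s : U →ₗ[K] V, L.mkQ ∘ₗ s = U.subtype ∧ LinearMap.range s = W := by
  set g := L.mkQ.domRestrict W
  have hg : Function.Injective g := by
    rw [← LinearMap.ker_eq_bot, LinearMap.ker_domRestrict, ker_mkQ, ← disjoint_iff_comap_eq_bot]
    exact hW
  have hrange : U = LinearMap.range g := by rw [LinearMap.range_domRestrict, hWU]
  set e : U ≃ₗ[K] W := (LinearEquiv.ofEq _ _ hrange).trans (LinearEquiv.ofInjective g hg).symm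
  refine ⟨W.subtype ∘ₗ e, ?_, ?_⟩
  · ext u
    exact LinearEquiv.ofInjective_symm_apply (f := g) (h := hg) (LinearEquiv.ofEq _ _ hrange u)
  · rw [LinearMap.range_comp, LinearEquiv.range, map_top, range_subtype]

theorem eq_of_range_eq_of_mkQ_comp_eq {s s' : U →ₗ[K] V} (hs : L.mkQ ∘ₗ s = U.subtype)
    (hs' : L.mkQ ∘ₗ s' = U.subtype) (h : LinearMap.range s = LinearMap.range s') : s = s' := by
  ext u
  have hmem : s u - s' u ∈ LinearMap.range s :=
    sub_mem (LinearMap.mem_range_self s u) (h ▸ LinearMap.mem_range_self s' u)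
  exact sub_eq_zero.mp
    (disjoint_def.mp (disjoint_range_of_mkQ_comp_eq hs) _ hmem (sub_mem_of_mkQ_comp_eq hs hs' u))

variable (L U)

theorem card_disjoint_map_mkQ_eq_card_mkQ_comp_eq :
    Nat.card {W : Submodule K V // Disjoint W L ∧ W.map L.mkQ = U}
      = Nat.card {s : U →ₗ[K] V // L.mkQ ∘ₗ s = U.subtype} := by
  refine (Nat.card_congr (Equiv.ofBijective (fun s => ⟨LinearMap.range s.1,
    disjoint_range_of_mkQ_comp_eq s.2, map_mkQ_range_of_mkQ_comp_eq s.2⟩) ⟨?_, ?_⟩)).symm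
  · rintro ⟨s, hs⟩ ⟨s', hs'⟩ h
    exact Subtype.ext (eq_of_range_eq_of_mkQ_comp_eq hs hs' (congrArg Subtype.val h))
  · rintro ⟨W, hW, hWU⟩
    obtain ⟨s, hs, rfl⟩ := exists_mkQ_comp_eq_of_disjoint hW hWU
    exact ⟨⟨s, hs⟩, rfl⟩

theorem card_mkQ_comp_eq_subtype [Fintype K] [FiniteDimensional K V] :
    Nat.card {s : U →ₗ[K] V // L.mkQ ∘ₗ s = U.subtype}
      = Fintype.card K ^ (finrank K U * finrank K L) := by
  obtain ⟨σ, hσ⟩ := L.mkQ.exists_rightInverse_of_surjective L.range_mkQ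
  have hs₀ : L.mkQ ∘ₗ σ ∘ₗ U.subtype = U.subtype := by
    rw [← LinearMap.comp_assoc, hσ, LinearMap.id_comp]
  have e : {s : U →ₗ[K] V // L.mkQ ∘ₗ s = U.subtype} ≃ (U →ₗ[K] L) :=
    { toFun s := LinearMap.codRestrict L (s.1 - σ ∘ₗ U.subtype) (sub_mem_of_mkQ_comp_eq s.2 hs₀)
      invFun φ := ⟨σ ∘ₗ U.subtype + L.subtype ∘ₗ φ, by
        ext u
        simpa [(Quotient.mk_eq_zero L).mpr (φ u).2] using LinearMap.congr_fun hs₀ u⟩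
      left_inv s := by ext; simp
      right_inv φ := by ext; simp }
  rw [Nat.card_congr e, natCard_eq_pow_finrank (K := K), finrank_linearMap,
    Nat.card_eq_fintype_card]

end Sections

section Counting
variable {K V : Type*} [Field K] [AddCommGroup V] [Module K V] [FiniteDimensional K V]

theorem card_finrank_eq_zero : Nat.card {W : Submodule K V // finrank K W = 0} = 1 :=
  Nat.card_eq_one_iff_unique.mpr
    ⟨⟨fun W W' => Subtype.ext ((finrank_eq_zero.mp W.2).trans (finrank_eq_zero.mp W'.2).symm)⟩,
      ⟨⟨⊥, finrank_bot K V⟩⟩⟩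

theorem card_finrank_eq_add_and_le (Z : Submodule K V) (c : ℕ) :
    Nat.card {W : Submodule K V // finrank K W = c + finrank K Z ∧ Z ≤ W}
      = Nat.card {U : Submodule K (V ⧸ Z) // finrank K U = c} := by
  refine Nat.card_congr
    { toFun W := ⟨W.1.map Z.mkQ, ?_⟩
      invFun U := ⟨U.1.comap Z.mkQ, by rw [finrank_comap_mkQ, U.2], Z.le_comap_mkQ U⟩
      left_inv W := Subtype.ext (by simp only [comap_map_mkQ, sup_eq_right.mpr W.2.2])
      right_inv U := Subtype.ext (map_comap_eq_of_surjective Z.mkQ_surjective U) }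
  have h := finrank_comap_mkQ Z (W.1.map Z.mkQ)
  rw [comap_map_mkQ, sup_eq_right.mpr W.2.2, W.2.1] at h
  omega

variable [Fintype K]

theorem card_finrank_eq_and_disjoint (L : Submodule K V) (k : ℕ) :
    Nat.card {W : Submodule K V // finrank K W = k ∧ Disjoint W L}
      = Fintype.card K ^ (k * finrank K L)
        * Nat.card {U : Submodule K (V ⧸ L) // finrank K U = k} := by
  have e : {W : Submodule K V // finrank K W = k ∧ Disjoint W L} ≃
      Σ U : {U : Submodule K (V ⧸ L) // finrank K U = k},
        {W : Submodule K V // Disjoint W L ∧ W.map L.mkQ = U} :=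
    { toFun W := ⟨⟨W.1.map L.mkQ, (finrank_map_mkQ_of_disjoint W.2.2).trans W.2.1⟩,
        ⟨W.1, W.2.2, rfl⟩⟩
      invFun x := ⟨x.2.1, by rw [← finrank_map_mkQ_of_disjoint x.2.2.1, x.2.2.2, x.1.2], x.2.2.1⟩
      left_inv W := rfl
      right_inv x := Sigma.subtype_ext (Subtype.ext x.2.2.2) rfl }
  have := Fintype.ofFinite {U : Submodule K (V ⧸ L) // finrank K U = k}
  rw [Nat.card_congr e, Nat.card_sigma]
  simp only [card_disjoint_map_mkQ_eq_card_mkQ_comp_eq, card_mkQ_comp_eq_subtype]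
  rw [Finset.sum_congr rfl fun U _ => by rw [U.2], Finset.sum_const, Finset.card_univ, smul_eq_mul,
    Nat.card_eq_fintype_card, mul_comm]

theorem card_finrank_eq (k : ℕ) :
    Nat.card {W : Submodule K V // finrank K W = k}
      = gaussBinom (Fintype.card K) (finrank K V) k := by
  obtain ⟨n, hn⟩ : ∃ n, finrank K V = n := ⟨_, rfl⟩
  induction n generalizing V k with
  | zero =>
    rcases k with _ | k
    · rw [card_finrank_eq_zero, gaussBinom_zero_right]
    rw [hn, gaussBinom_eq_zero_of_lt _ k.succ_pos]
    exact Nat.card_eq_zero.mpr (Or.inl ⟨fun W => by have := W.1.finrank_le; omega⟩)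
  | succ n ih =>
    rcases k with _ | k
    · rw [card_finrank_eq_zero, gaussBinom_zero_right]
    obtain ⟨v, hv⟩ := (finrank_pos_iff_exists_ne_zero (R := K) (M := V)).mp (by omega)
    have hL : finrank K (K ∙ v) = 1 := finrank_span_singleton hv
    have hQ : finrank K (V ⧸ K ∙ v) = n := by
      have := (K ∙ v).finrank_quotient_add_finrank
      omega
    rw [Nat.card_subtype_eq_card_and_add_card_and_not _ (v ∈ ·), hn, gaussBinom, ← hQ, ← ih k hQ,
      ← ih (k + 1) hQ]
    congr 1
    · rw [← card_finrank_eq_add_and_le (K ∙ v) k, hL]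
      exact Nat.card_congr (Equiv.subtypeEquivRight fun W => by rw [span_singleton_le_iff_mem])
    · have h := card_finrank_eq_and_disjoint (K ∙ v) (k + 1)
      rw [hL, mul_one] at h
      rw [← h]
      exact Nat.card_congr (Equiv.subtypeEquivRight fun W => by rw [disjoint_span_singleton' hv])

theorem card_finrank_eq_and_le (Z : Submodule K V) (b : ℕ) :
    Nat.card {U : Submodule K V // finrank K U = b ∧ U ≤ Z}
      = gaussBinom (Fintype.card K) (finrank K Z) b := by
  rw [← card_finrank_eq]
  refine (Nat.card_congr
    { toFun p := ⟨p.1.map Z.subtype, (finrank_map_subtype_eq Z p.1).trans p.2, map_subtype_le Z p.1⟩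
      invFun U := ⟨U.1.comap Z.subtype, by
        rw [← finrank_map_subtype_eq, map_comap_subtype, inf_eq_right.mpr U.2.2, U.2.1]⟩
      left_inv p := Subtype.ext (comap_map_eq_of_injective Z.injective_subtype p.1)
      right_inv U := Subtype.ext ((map_comap_subtype Z U.1).trans (inf_eq_right.mpr U.2.2)) }).symm

theorem card_finrank_eq_and_ge (Z : Submodule K V) (a : ℕ) :
    (Nat.card {W : Submodule K V // finrank K W = a ∧ Z ≤ W} : ℤ)
      = gaussBinomZ (Fintype.card K : ℤ) (finrank K V - finrank K Z) (a - finrank K Z) := by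
  by_cases hZa : finrank K Z ≤ a
  · obtain ⟨c, rfl⟩ : ∃ c, a = c + finrank K Z := ⟨a - finrank K Z, by omega⟩
    have hQ : (finrank K V : ℤ) - finrank K Z = (finrank K (V ⧸ Z) : ℕ) := by
      have := Z.finrank_quotient_add_finrank
      omega
    rw [card_finrank_eq_add_and_le, card_finrank_eq, hQ, Nat.cast_add, add_sub_cancel_right,
      gaussBinomZ_natCast, Nat.cast_gaussBinom]
  · rw [gaussBinomZ_of_neg _ (by omega), Nat.cast_eq_zero, Nat.card_eq_zero]
    exact Or.inl ⟨fun W => hZa (W.2.1 ▸ finrank_mono W.2.2)⟩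

theorem sum_card_le_inf_comap_eq_sum_card_sup_map_le (T : V →ₗ[K] V) (a b : ℕ)
    [Fintype {W : Submodule K V // finrank K W = a}]
    [Fintype {U : Submodule K V // finrank K U = b}] :
    ∑ W : {W : Submodule K V // finrank K W = a},
        Nat.card {U : Submodule K V // finrank K U = b ∧ U ≤ W.1 ⊓ W.1.comap T}
      = ∑ U : {U : Submodule K V // finrank K U = b},
        Nat.card {W : Submodule K V // finrank K W = a ∧ U.1 ⊔ U.1.map T ≤ W} := by
  rw [← Nat.card_sigma, ← Nat.card_sigma]
  exact Nat.card_congr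
    { toFun x := ⟨⟨x.2.1, x.2.2.1⟩, ⟨x.1.1, x.1.2, (le_inf_comap_iff_sup_map_le T _ _).1 x.2.2.2⟩⟩
      invFun y := ⟨⟨y.2.1, y.2.2.1⟩, ⟨y.1.1, y.1.2, (le_inf_comap_iff_sup_map_le T _ _).2 y.2.2.2⟩⟩
      left_inv x := rfl
      right_inv y := rfl }

theorem sum_card_finrank_inf_comap_mul_gaussBinomZ (T : V →ₗ[K] V) (a b : ℕ) :
    ∑ k ∈ Finset.range (a + 1),
        (Nat.card {W : Submodule K V // finrank K W = a ∧ finrank K ↥(W ⊓ W.comap T) = k} : ℤ)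
          * gaussBinomZ (Fintype.card K : ℤ) k b
      = ∑ j ∈ Finset.range (b + 1),
        (Nat.card {U : Submodule K V // finrank K U = b ∧ finrank K ↥(U ⊓ U.comap T) = j} : ℤ)
          * gaussBinomZ (Fintype.card K : ℤ) (finrank K V - 2 * b + j) (a - 2 * b + j) := by
  have := Fintype.ofFinite {W : Submodule K V // finrank K W = a}
  have := Fintype.ofFinite {U : Submodule K V // finrank K U = b}
  have hW (W : {W : Submodule K V // finrank K W = a}) :
      (Nat.card {U : Submodule K V // finrank K U = b ∧ U ≤ W.1 ⊓ W.1.comap T} : ℤ)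
        = gaussBinomZ (Fintype.card K : ℤ) (finrank K ↥(W.1 ⊓ W.1.comap T)) b := by
    rw [card_finrank_eq_and_le, Nat.cast_gaussBinom, gaussBinomZ_natCast]
  have hU (U : {U : Submodule K V // finrank K U = b}) :
      (Nat.card {W : Submodule K V // finrank K W = a ∧ U.1 ⊔ U.1.map T ≤ W} : ℤ)
        = gaussBinomZ (Fintype.card K : ℤ) (finrank K V - 2 * b + finrank K ↥(U.1 ⊓ U.1.comap T))
            (a - 2 * b + finrank K ↥(U.1 ⊓ U.1.comap T)) := by
    have h := finrank_sup_map_add_finrank_inf_comap T U.1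
    rw [card_finrank_eq_and_ge]
    congr 1 <;> omega
  calc _ = ∑ W : {W : Submodule K V // finrank K W = a},
          gaussBinomZ (Fintype.card K : ℤ) (finrank K ↥(W.1 ⊓ W.1.comap T)) b :=
        (Fintype.sum_subtype_comp_eq_sum_range_card_mul _ _
          (fun W hW => Nat.lt_succ_of_le (hW ▸ finrank_mono inf_le_left)) _).symm
    _ = ∑ U : {U : Submodule K V // finrank K U = b}, gaussBinomZ (Fintype.card K : ℤ)
          (finrank K V - 2 * b + finrank K ↥(U.1 ⊓ U.1.comap T))
          (a - 2 * b + finrank K ↥(U.1 ⊓ U.1.comap T)) := by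
        simp only [← hW, ← hU]
        exact_mod_cast sum_card_le_inf_comap_eq_sum_card_sup_map_le T a b
    _ = _ :=
        Fintype.sum_subtype_comp_eq_sum_range_card_mul (fun U : Submodule K V => finrank K U = b)
          (fun U => finrank K ↥(U ⊓ U.comap T))
          (fun U hU => Nat.lt_succ_of_le (hU ▸ finrank_mono inf_le_left))
          (fun j => gaussBinomZ (Fintype.card K : ℤ) (finrank K V - 2 * b + j) (a - 2 * b + j))

end Counting

end Submodule

theorem Ncount_self (F : Type*) [Field F] (n : ℕ) (T : (Fin n → F) →ₗ[F] (Fin n → F)) (a : ℕ) :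
    Ncount F n T a a = Xcount F n T a :=
  Nat.card_congr (Equiv.subtypeEquivRight fun W => and_congr_right fun hW => by
    rw [← hW, Submodule.finrank_inf_comap_eq_iff])

theorem Ncount_recurrence_general (F : Type*) [Field F] [Fintype F] (n : ℕ)
    (T : (Fin n → F) →ₗ[F] (Fin n → F)) (a b : ℕ) (hba : b < a) :
    (Ncount F n T a b : ℤ) =
      (Xcount F n T b : ℤ) * gaussBinomZ (Fintype.card F : ℤ) ((n : ℤ) - b) ((a : ℤ) - b)
      - (Xcount F n T a : ℤ) * gaussBinomZ (Fintype.card F : ℤ) (a : ℤ) (b : ℤ)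
      + ∑ j ∈ Finset.range b,
          (Ncount F n T b j : ℤ) *
            gaussBinomZ (Fintype.card F : ℤ) ((n : ℤ) - 2 * b + j) ((a : ℤ) - 2 * b + j)
      - ∑ k ∈ Finset.Ico (b + 1) a,
          (Ncount F n T a k : ℤ) * gaussBinomZ (Fintype.card F : ℤ) (k : ℤ) (b : ℤ) := by
  have h := Submodule.sum_card_finrank_inf_comap_mul_gaussBinomZ T a b
  rw [finrank_fin_fun] at h
  change ∑ k ∈ Finset.range (a + 1), (Ncount F n T a k : ℤ) * _
    = ∑ j ∈ Finset.range (b + 1), (Ncount F n T b j : ℤ) * _ at h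
  rw [Finset.sum_range_succ, ← Finset.sum_range_add_sum_Ico _ hba.le,
    Finset.sum_eq_sum_Ico_succ_bot hba, Finset.sum_range_succ, Ncount_self, Ncount_self,
    gaussBinomZ_natCast, gaussBinom_self,
    Finset.sum_eq_zero fun k hk => by
      rw [gaussBinomZ_natCast, gaussBinom_eq_zero_of_lt _ (Finset.mem_range.mp hk), mul_zero]] at h
  have hn : (n : ℤ) - 2 * b + b = n - b := by ring
  have ha : (a : ℤ) - 2 * b + b = a - b := by ring
  rw [hn, ha] at h
  linarith

/-- The recurrence of Proposition 3.3: for `n ≥ a > b ≥ 0`,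
`N(a,b) = X_b (n-b choose a-b)_q - X_a (a choose b)_q
  + ∑_{j=0}^{b-1} N(b,j) (n-2b+j choose a-2b+j)_q - ∑_{k=b+1}^{a-1} N(a,k) (k choose b)_q`. -/
theorem Ncount_recurrence (F : Type*) [Field F] [Fintype F] (n : ℕ)
    (T : (Fin n → F) →ₗ[F] (Fin n → F)) (a b : ℕ) (hba : b < a) (han : a ≤ n) :
    (Ncount F n T a b : ℤ) =
      (Xcount F n T b : ℤ) * gaussBinomZ (Fintype.card F : ℤ) ((n : ℤ) - b) ((a : ℤ) - b)
      - (Xcount F n T a : ℤ) * gaussBinomZ (Fintype.card F : ℤ) (a : ℤ) (b : ℤ)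
      + ∑ j ∈ Finset.range b,
          (Ncount F n T b j : ℤ) *
            gaussBinomZ (Fintype.card F : ℤ) ((n : ℤ) - 2 * b + j) ((a : ℤ) - 2 * b + j)
      - ∑ k ∈ Finset.Ico (b + 1) a,
          (Ncount F n T a k : ℤ) * gaussBinomZ (Fintype.card F : ℤ) (k : ℤ) (b : ℤ) :=
  Ncount_recurrence_general F n T a b hba
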